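/- arXiv:1706.07946 — 4 statements merged into one kernel-verified Lean document; each statement's English description precedes it below -/
import Mathlib

section
/- Equivalence of program rules (soundness direction): if a standard CHR transition S ↦_r T applies rule r: H₁ \ H₂ ⇔ C | B, then for any annotation of S with justifications there is a transition with the translated rule rf from the annotated state S^J to a state equivalent to T^J ∧ rem(H₂)^J, where T^J annotates body constraints with the union of head justifications. -/
variable {C J : Type*} [DecidableEq J]

/-- A (generalized) simpagation rule: kept head, removed head, guard and body.
Built-ins in the body are restricted, so the body is a multiset of
user-defined constraints and the guard is a proposition. -/
structure Rule (C : Type*) where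
  kept : Multiset C
  removed : Multiset C
  guard : Prop
  body : Multiset C

/-- Standard CHR transition with rule `r`. -/
def Step (r : Rule C) (S T : Multiset C) : Prop :=
  r.guard ∧ ∃ G : Multiset C,
    S = r.kept + r.removed + G ∧ T = r.kept + r.body + G

/-- Annotated constraints: user constraints with a justification set, and
reserved `rem` constraints remembering a removed annotated constraint,
themselves annotated with a justification set. -/
inductive AConstr (C J : Type*) where
  | user : C → Finset J → AConstr C J
  | rem : C → Finset J → Finset J → AConstr C J

/-- Erasure: drop justification annotations and delete `rem` constraints. -/
def eraseA (S : Multiset (AConstr C J)) : Multiset C :=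
  S.filterMap fun a => match a with
    | AConstr.user c _ => some c
    | AConstr.rem _ _ _ => none

/-- Transition with the translated rule `rf` of rule `r`: the head is matched
against annotated constraints, each removed constraint `R^{F_j}` is remembered
as `rem(R^{F_j})^F`, and every body constraint is annotated with the union `F`
of all head justification sets. -/
def JStep (r : Rule C) (S T : Multiset (AConstr C J)) : Prop :=
  r.guard ∧ ∃ (K R : Multiset (C × Finset J)) (G : Multiset (AConstr C J)),
    K.map Prod.fst = r.kept ∧ R.map Prod.fst = r.removed ∧
    S = K.map (fun p => AConstr.user p.1 p.2) +
        R.map (fun p => AConstr.user p.1 p.2) + G ∧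
    T = K.map (fun p => AConstr.user p.1 p.2) +
        R.map (fun p => AConstr.rem p.1 p.2
          ((K.map Prod.snd).sup ∪ (R.map Prod.snd).sup)) +
        r.body.map (fun b => AConstr.user b
          ((K.map Prod.snd).sup ∪ (R.map Prod.snd).sup)) + G

/-! Splitting the annotated state along the decomposition `H₁ + H₂ + G` of its erasure
locates annotated copies of both heads, on which the translated rule fires. Erasure forgets
the annotations and deletes the `rem`-constraints that record `H₂`, so the translated
successor erases to `H₁ + B + G`. -/

theorem Multiset.exists_eq_add_of_map_eq_add {α β : Type*} (f : α → β) {s : Multiset α}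
    {t u : Multiset β} (h : s.map f = t + u) :
    ∃ t' u' : Multiset α, s = t' + u' ∧ t'.map f = t ∧ u'.map f = u := by
  classical
  induction t using Multiset.induction generalizing s with
  | empty => exact ⟨0, s, (zero_add s).symm, rfl, by rwa [zero_add] at h⟩
  | cons b t ih =>
    rw [Multiset.cons_add] at h
    obtain ⟨a, ha, rfl, hrest⟩ := (Multiset.map_eq_cons f s (t + u) b).mpr h
    obtain ⟨t', u', hsplit, rfl, rfl⟩ := ih hrest
    refine ⟨a ::ₘ t', u', ?_, Multiset.map_cons f a t', rfl⟩
    rw [Multiset.cons_add, ← hsplit, Multiset.cons_erase ha]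

section eraseA

variable {α β ι : Type*}

theorem eraseA_add (A B : Multiset (AConstr α ι)) : eraseA (A + B) = eraseA A + eraseA B :=
  Multiset.filterMap_add _ A B

theorem eraseA_map_user (f : β → α) (g : β → Finset ι) (M : Multiset β) :
    eraseA (M.map fun x => AConstr.user (f x) (g x)) = M.map f :=
  (Multiset.filterMap_map _ _ M).trans (congrFun (Multiset.filterMap_eq_map f) M)

theorem eraseA_map_rem (f : β → α) (g h : β → Finset ι) (M : Multiset β) :
    eraseA (M.map fun x => AConstr.rem (f x) (g x) (h x)) = 0 := by
  rw [eraseA, Multiset.filterMap_map]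
  induction M using Multiset.induction with
  | empty => rfl
  | cons x M ih => rwa [Multiset.filterMap_cons_none _ _ rfl]

end eraseA

/-- Soundness direction of the equivalence of program rules: every standard
transition `S ↦_r T` lifts, for any justification annotation of `S`, to a
transition of the translated rule whose target erases back to `T`. -/
theorem step_lifts_to_jstep (r : Rule C) (S T : Multiset C)
    (h : Step r S T) (S' : Multiset (C × Finset J))
    (hS : S'.map Prod.fst = S) :
    ∃ T' : Multiset (AConstr C J),
      JStep r (S'.map fun p => AConstr.user p.1 p.2) T' ∧ eraseA T' = T := by
  obtain ⟨hguard, G, rfl, rfl⟩ := h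
  obtain ⟨KR, G', rfl, hKR, hG'⟩ := Multiset.exists_eq_add_of_map_eq_add Prod.fst hS
  obtain ⟨K, R, rfl, hK, hR⟩ := Multiset.exists_eq_add_of_map_eq_add Prod.fst hKR
  set F := (K.map Prod.snd).sup ∪ (R.map Prod.snd).sup
  refine ⟨K.map (fun p => AConstr.user p.1 p.2) + R.map (fun p => AConstr.rem p.1 p.2 F) +
      r.body.map (fun b => AConstr.user b F) + G'.map (fun p => AConstr.user p.1 p.2),
    ⟨hguard, K, R, G'.map (fun p => AConstr.user p.1 p.2), hK, hR,
      by rw [Multiset.map_add, Multiset.map_add], rfl⟩, ?_⟩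
  simp only [eraseA_add, eraseA_map_user, eraseA_map_rem, Multiset.map_id', hK, hG', add_zero]
end

section
/- If a transition with a translated rule rf involves no constraint whose justification set contains f, then no constraint added by the rule body contains f in its justification set; hence constraints containing justification f can only be produced from constraints already containing f. -/
variable {C J : Type*} [DecidableEq J]

/-- Annotated constraints with reserved `rem` constraints. -/
inductive AC (C J : Type*) where
  | user : C → Finset J → AC C J
  | rem : C → Finset J → Finset J → AC C J

/-- The (outer) justification annotation of an annotated constraint. -/
def ann {C J : Type*} : AC C J → Finset J
  | AC.user _ F => F
  | AC.rem _ _ F => F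

/-- The union of the justification sets of the matched head constraints. -/
def headJust (K R : Multiset (C × Finset J)) : Finset J :=
  (K.map Prod.snd).sup ∪ (R.map Prod.snd).sup

/-- The constraints added by applying the translated rule with matched kept
head `K`, removed head `R` and original body `B`: one `rem` constraint per
removed head constraint and the annotated body constraints, all annotated
with the union of the head justification sets. -/
def produced (K R : Multiset (C × Finset J)) (B : Multiset C) :
    Multiset (AC C J) :=
  R.map (fun p => AC.rem p.1 p.2 (headJust K R)) +
    B.map (fun b => AC.user b (headJust K R))

/-- All justification sets occurring in an annotated constraint (for `rem`,
both the inner and the outer annotation). -/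
def occursIn {C J : Type*} (f : J) : AC C J → Prop
  | AC.user _ F => f ∈ F
  | AC.rem _ Fc F => f ∈ Fc ∨ f ∈ F

theorem Multiset.mem_sup_finset {α : Type*} [DecidableEq α] {S : Multiset (Finset α)} {a : α} :
    a ∈ S.sup ↔ ∃ s ∈ S, a ∈ s := by
  induction S using Multiset.induction <;> simp_all

theorem mem_headJust {K R : Multiset (C × Finset J)} {f : J} :
    f ∈ headJust K R ↔ ∃ p ∈ K + R, f ∈ p.2 := by
  simp only [headJust, Finset.mem_union, Multiset.mem_sup_finset, Multiset.mem_map,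
    exists_exists_and_eq_and, Multiset.mem_add, or_and_right, exists_or]

/-- If a transition with a translated rule involves no head constraint whose
justification set contains `f`, then no constraint added by the rule body
contains `f` in any of its justification sets; hence constraints containing
`f` can only be produced from constraints already containing `f`. -/
theorem produced_avoids_uninvolved_just (K R : Multiset (C × Finset J))
    (B : Multiset C) (f : J)
    (h : ∀ p ∈ K + R, f ∉ p.2) :
    ∀ a ∈ produced K R B, ¬ occursIn f a := by
  have hHJ : f ∉ headJust K R := fun hf =>
    let ⟨p, hp, hfp⟩ := mem_headJust.1 hf
    h p hp hfp
  intro a ha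
  rcases Multiset.mem_add.1 ha with hrem | hbody
  · obtain ⟨p, hp, rfl⟩ := Multiset.mem_map.1 hrem
    exact not_or.2 ⟨h p (Multiset.mem_add.2 (Or.inr hp)), hHJ⟩
  · obtain ⟨b, -, rfl⟩ := Multiset.mem_map.1 hbody
    exact hHJ
end

section
/- Correctness of retraction for the minimum program: for a finite nonempty multiset S of numbers, exhaustively applying the rule min(N) \ min(M) ⇔ N ≤ M | true terminates with exactly one remaining constraint min(m) where m is the minimum of S; moreover, after logically retracting one element x (re-adding all remembered removed constraints whose justifications involve x and deleting all constraints involving x) and re-running to exhaustion, the remaining constraint is min(min(S \ {x})), provided S \ {x} is nonempty. -/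
/-!
The rule only ever deletes a constraint `min(m)` in the presence of a constraint `min(n)` with
`n ≤ m`, so every step shrinks the store, the values present always come from the candidates, and
"some active value is `≤ a`" is invariant. A stuck store has at most one element, which therefore
is the minimum.

For retraction of `i` the same invariant holds for the *retracted* store along the original run:
if the step removed `min(m)` because of `min(n)`, then either `min(n)` survives the retraction, or
`i` justifies it and `min(m)` is re-added from the record of that step. Values in the retracted
store are never justified by `i`, so by conservation of active plus removed constraints they come
from `l.eraseIdx i`.
-/

/-- A state of the (justified) minimum program: the active annotated `min`
constraints together with the remembered removed constraints, each recorded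
with the union of the justification sets of the rule application that removed
it. Justifications are the indices of the initial candidates. -/
abbrev MinState (α : Type*) :=
  Multiset (α × Finset ℕ) × Multiset ((α × Finset ℕ) × Finset ℕ)

/-- One application of the rule `min(N) \ min(M) ⇔ N ≤ M | true` with
justifications: the larger candidate is removed and remembered with the union
of the two justification sets. -/
def MinStep {α : Type*} [LinearOrder α] (s t : MinState α) : Prop :=
  ∃ (n m : α) (Fn Fm : Finset ℕ) (G : Multiset (α × Finset ℕ)),
    n ≤ m ∧ s.1 = (n, Fn) ::ₘ (m, Fm) ::ₘ G ∧
    t.1 = (n, Fn) ::ₘ G ∧ t.2 = ((m, Fm), Fn ∪ Fm) ::ₘ s.2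

/-- The initial state for the list `l` of candidates: the `i`-th candidate is
annotated with the singleton justification set `{i}`, nothing is remembered. -/
def minInit {α : Type*} (l : List α) : MinState α :=
  (↑(l.mapIdx fun i a => (a, ({i} : Finset ℕ))), 0)

/-- Logical retraction of the candidate with justification `i`: delete all
active constraints whose justification set contains `i`, re-add all remembered
constraints whose remembering annotation contains `i` (unless their own
justification set contains `i`), and delete the affected `rem` records. -/
def minRetract {α : Type*} (i : ℕ) (s : MinState α) : MinState α :=
  (s.1.filter (fun p => i ∉ p.2) +
     (s.2.filter (fun q => i ∈ q.2 ∧ i ∉ q.1.2)).map Prod.fst,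
   s.2.filter (fun q => i ∉ q.2))

/-- No rule application is possible. -/
def minStuck {α : Type*} [LinearOrder α] (s : MinState α) : Prop :=
  ∀ t, ¬ MinStep s t

theorem List.map_fst_filter_zipIdx_ne {α : Type*} :
    ∀ (l : List α) (k i : ℕ),
      ((l.zipIdx k).filter (fun p => p.2 ≠ k + i)).map Prod.fst = l.eraseIdx i
  | [], _, _ => rfl
  | a :: l, k, 0 => by
      have hkeep : (l.zipIdx (k + 1)).filter (fun p => p.2 ≠ k + 0) = l.zipIdx (k + 1) :=
        List.filter_eq_self.2 fun p hp => by
          have := List.le_snd_of_mem_zipIdx hp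
          simp only [ne_eq, decide_eq_true_eq]
          omega
      rw [List.zipIdx_cons, List.filter_cons_of_neg (by simp), hkeep, List.zipIdx_map_fst]
      rfl
  | a :: l, k, i + 1 => by
      rw [List.zipIdx_cons, List.filter_cons_of_pos (by simp), List.map_cons,
        List.eraseIdx_cons_succ, ← List.map_fst_filter_zipIdx_ne l (k + 1) i,
        show k + 1 + i = k + (i + 1) by omega]

theorem Relation.ReflTransGen.invariant {β : Type*} {r : β → β → Prop} {P : β → Prop}
    (hP : ∀ a b, r a b → P a → P b) {a b : β} (h : Relation.ReflTransGen r a b) (ha : P a) :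
    P b := by
  induction h with
  | refl => exact ha
  | tail _ hbc ih => exact hP _ _ hbc ih

section MinProgram

variable {α : Type*}

theorem minInit_map_fst (l : List α) : (minInit l).1.map Prod.fst = ↑l := by
  simp [minInit, List.mapIdx_eq_zipIdx_map, Function.comp_def, List.zipIdx_map_fst]

theorem minRetract_minInit_fst (i : ℕ) (l : List α) :
    (minRetract i (minInit l)).1 = (minInit l).1.filter (fun p => i ∉ p.2) := by
  simp [minRetract, minInit]

theorem minRetract_minInit_map_fst (i : ℕ) (l : List α) :
    (minRetract i (minInit l)).1.map Prod.fst = ↑(l.eraseIdx i) := by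
  rw [minRetract_minInit_fst, ← List.map_fst_filter_zipIdx_ne l 0 i]
  simp [minInit, List.mapIdx_eq_zipIdx_map, List.filter_map, Function.comp_def, eq_comm]

theorem mem_minRetract_fst {i : ℕ} {s : MinState α} {p : α × Finset ℕ} :
    p ∈ (minRetract i s).1 ↔
      (p ∈ s.1 ∧ i ∉ p.2) ∨ ∃ F, (p, F) ∈ s.2 ∧ i ∈ F ∧ i ∉ p.2 := by
  simp [minRetract]

theorem minRetract_fst_le (i : ℕ) (s : MinState α) :
    (minRetract i s).1 ≤ (s.1 + s.2.map Prod.fst).filter (fun p => i ∉ p.2) := by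
  rw [Multiset.filter_add, Multiset.filter_map]
  exact add_le_add le_rfl
    (Multiset.map_le_map (Multiset.monotone_filter_right _ fun _ hq => hq.2))

theorem exists_fst_le_min_of_map_fst_eq {β : Type*} [LinearOrder α] {A : Multiset (α × β)}
    {V : List α} (h : A.map Prod.fst = ↑V) (hV : V ≠ []) : ∃ p ∈ A, p.1 ≤ V.min hV := by
  obtain ⟨p, hp, hpV⟩ := Multiset.mem_map.1 (h ▸ Multiset.mem_coe.2 (List.min_mem hV))
  exact ⟨p, hp, hpV.le⟩

variable [LinearOrder α] {s t : MinState α}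

namespace MinStep

theorem card_fst (h : MinStep s t) : Multiset.card t.1 + 1 = Multiset.card s.1 := by
  obtain ⟨n, m, Fn, Fm, G, -, hs, ht, -⟩ := h
  simp [hs, ht]

theorem fst_le (h : MinStep s t) : t.1 ≤ s.1 := by
  obtain ⟨n, m, Fn, Fm, G, -, hs, ht, -⟩ := h
  rw [hs, ht]
  exact Multiset.cons_le_cons _ (Multiset.le_cons_self _ _)

theorem fst_add_map_snd (h : MinStep s t) :
    t.1 + t.2.map Prod.fst = s.1 + s.2.map Prod.fst := by
  obtain ⟨n, m, Fn, Fm, G, -, hs, ht1, ht2⟩ := h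
  rw [hs, ht1, ht2, Multiset.map_cons]
  simp only [← Multiset.singleton_add]
  abel

theorem exists_of_fst_eq_cons_cons {a b : α × Finset ℕ} {G : Multiset (α × Finset ℕ)}
    (h : s.1 = a ::ₘ b ::ₘ G) : ∃ t, MinStep s t := by
  rcases le_total a.1 b.1 with hab | hba
  · exact ⟨(a ::ₘ G, (b, a.2 ∪ b.2) ::ₘ s.2), a.1, b.1, a.2, b.2, G, hab, h, rfl, rfl⟩
  · exact ⟨(b ::ₘ G, (a, b.2 ∪ a.2) ::ₘ s.2), b.1, a.1, b.2, a.2, G, hba,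
      h.trans (Multiset.cons_swap _ _ _), rfl, rfl⟩

theorem exists_fst_le (h : MinStep s t) {a : α} (hw : ∃ p ∈ s.1, p.1 ≤ a) :
    ∃ p ∈ t.1, p.1 ≤ a := by
  obtain ⟨n, m, Fn, Fm, G, hnm, hs, ht, -⟩ := h
  obtain ⟨p, hp, hpa⟩ := hw
  rw [hs] at hp
  rw [ht]
  rcases Multiset.mem_cons.1 hp with rfl | hp
  · exact ⟨_, Multiset.mem_cons_self _ _, hpa⟩
  rcases Multiset.mem_cons.1 hp with rfl | hp
  · exact ⟨_, Multiset.mem_cons_self _ _, hnm.trans hpa⟩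
  · exact ⟨p, Multiset.mem_cons_of_mem hp, hpa⟩

theorem exists_minRetract_fst_le (i : ℕ) (h : MinStep s t) {a : α}
    (hw : ∃ p ∈ (minRetract i s).1, p.1 ≤ a) : ∃ p ∈ (minRetract i t).1, p.1 ≤ a := by
  obtain ⟨n, m, Fn, Fm, G, hnm, hs, ht1, ht2⟩ := h
  obtain ⟨p, hp, hpa⟩ := hw
  have of_fst {q : α × Finset ℕ} (hq : q ∈ t.1) (hi : i ∉ q.2) : q ∈ (minRetract i t).1 :=
    mem_minRetract_fst.2 (Or.inl ⟨hq, hi⟩)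
  have of_snd {q : α × Finset ℕ} {F : Finset ℕ} (hq : (q, F) ∈ t.2) (hF : i ∈ F)
      (hi : i ∉ q.2) : q ∈ (minRetract i t).1 :=
    mem_minRetract_fst.2 (Or.inr ⟨F, hq, hF, hi⟩)
  rcases mem_minRetract_fst.1 hp with ⟨hp, hip⟩ | ⟨F, hp, hiF, hip⟩
  · rw [hs] at hp
    rcases Multiset.mem_cons.1 hp with rfl | hp
    · exact ⟨_, of_fst (ht1 ▸ Multiset.mem_cons_self _ _) hip, hpa⟩
    rcases Multiset.mem_cons.1 hp with rfl | hp
    · by_cases hin : i ∈ Fn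
      · exact ⟨_, of_snd (ht2 ▸ Multiset.mem_cons_self _ _) (Finset.mem_union_left _ hin) hip,
          hpa⟩
      · exact ⟨_, of_fst (ht1 ▸ Multiset.mem_cons_self _ _) hin, hnm.trans hpa⟩
    · exact ⟨p, of_fst (ht1 ▸ Multiset.mem_cons_of_mem hp) hip, hpa⟩
  · exact ⟨p, of_snd (ht2 ▸ Multiset.mem_cons_of_mem hp) hiF hip, hpa⟩

theorem fst_le_of_reflTransGen (h : Relation.ReflTransGen MinStep s t) : t.1 ≤ s.1 :=
  h.invariant (P := fun u : MinState α => u.1 ≤ s.1) (fun _ _ h hb => h.fst_le.trans hb) le_rfl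

theorem fst_add_map_snd_of_reflTransGen (h : Relation.ReflTransGen MinStep s t) :
    t.1 + t.2.map Prod.fst = s.1 + s.2.map Prod.fst :=
  h.invariant (P := fun u : MinState α => u.1 + u.2.map Prod.fst = s.1 + s.2.map Prod.fst)
    (fun _ _ h hb => h.fst_add_map_snd.trans hb) rfl

end MinStep

theorem wellFounded_minStep_swap : WellFounded (fun s t : MinState α => MinStep t s) :=
  Subrelation.wf (fun h => Nat.lt_of_succ_le (MinStep.card_fst h).le)
    (InvImage.wf (fun s : MinState α => Multiset.card s.1) wellFounded_lt)

theorem minStuck.fst_eq_singleton (ht : minStuck t) {p : α × Finset ℕ} (hp : p ∈ t.1) :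
    t.1 = {p} := by
  obtain ⟨G, hG⟩ := Multiset.exists_cons_of_mem hp
  rcases Multiset.empty_or_exists_mem G with rfl | ⟨q, hq⟩
  · exact hG
  obtain ⟨G', rfl⟩ := Multiset.exists_cons_of_mem hq
  obtain ⟨u, hu⟩ := MinStep.exists_of_fst_eq_cons_cons hG
  exact absurd hu (ht u)

theorem eq_singleton_min_of_stuck {V : List α} (hV : V ≠ [])
    (hst : Relation.ReflTransGen MinStep s t) (ht : minStuck t)
    (hsV : s.1.map Prod.fst ≤ ↑V) (hw : ∃ p ∈ s.1, p.1 ≤ V.min hV) :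
    ∃ (m : α) (F : Finset ℕ), t.1 = {(m, F)} ∧ m ∈ V ∧ ∀ y ∈ V, m ≤ y := by
  obtain ⟨p, hp, hpmin⟩ := hst.invariant (fun _ _ h => h.exists_fst_le) hw
  have htV : t.1.map Prod.fst ≤ ↑V :=
    (Multiset.map_le_map (MinStep.fst_le_of_reflTransGen hst)).trans hsV
  refine ⟨p.1, p.2, ht.fst_eq_singleton hp, ?_, fun y hy => hpmin.trans (List.min_le_of_mem hy)⟩
  exact Multiset.mem_coe.1 (Multiset.mem_of_le htV (Multiset.mem_map_of_mem _ hp))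

theorem minRetract_map_fst_le_eraseIdx {l : List α}
    (hs : Relation.ReflTransGen MinStep (minInit l) s) (i : ℕ) :
    (minRetract i s).1.map Prod.fst ≤ ↑(l.eraseIdx i) := by
  have hconserved : s.1 + s.2.map Prod.fst = (minInit l).1 := by
    simpa [minInit] using MinStep.fst_add_map_snd_of_reflTransGen hs
  calc (minRetract i s).1.map Prod.fst
      ≤ ((s.1 + s.2.map Prod.fst).filter (fun p => i ∉ p.2)).map Prod.fst :=
        Multiset.map_le_map (minRetract_fst_le i s)
    _ = ↑(l.eraseIdx i) := by
      rw [hconserved, ← minRetract_minInit_fst, minRetract_minInit_map_fst]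

end MinProgram

/-- Correctness of retraction for the minimum program: from a nonempty list of
candidates, (1) exhaustive application of the rule terminates, (2) every final
state contains exactly one constraint `min(m)` where `m` is the minimum of the
candidates, and (3) after logically retracting the candidate at position `i`
and re-running to exhaustion, the single remaining constraint is the minimum
of the remaining candidates (provided some candidate remains). -/
theorem min_program_correct {α : Type*} [LinearOrder α] (l : List α)
    (hl : l ≠ []) :
    (∀ s : MinState α, Relation.ReflTransGen MinStep (minInit l) s →
      Acc (fun a b => MinStep b a) s) ∧
    (∀ s : MinState α, Relation.ReflTransGen MinStep (minInit l) s →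
      minStuck s →
      ∃ (m : α) (F : Finset ℕ), s.1 = {(m, F)} ∧ m ∈ l ∧ ∀ y ∈ l, m ≤ y) ∧
    (∀ s : MinState α, Relation.ReflTransGen MinStep (minInit l) s →
      minStuck s → ∀ i : ℕ, i < l.length → l.eraseIdx i ≠ [] →
      ∀ t : MinState α, Relation.ReflTransGen MinStep (minRetract i s) t →
      minStuck t →
      ∃ (m : α) (F : Finset ℕ), t.1 = {(m, F)} ∧ m ∈ l.eraseIdx i ∧
        ∀ y ∈ l.eraseIdx i, m ≤ y) := by
  refine ⟨fun s _ => wellFounded_minStep_swap.apply s, fun s hs hstuck => ?_,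
    fun s hs _ i _ hne t ht htstuck => ?_⟩
  · have hinit := minInit_map_fst l
    exact eq_singleton_min_of_stuck hl hs hstuck hinit.le
      (exists_fst_le_min_of_map_fst_eq hinit hl)
  · have hw := hs.invariant (fun _ _ h => h.exists_minRetract_fst_le i)
      (exists_fst_le_min_of_map_fst_eq (minRetract_minInit_map_fst i l) hne)
    exact eq_singleton_min_of_stuck hne ht htstuck (minRetract_map_fst_le_eraseIdx hs i) hw
end

section
/- In the shortest-path program with justifications, every derived path constraint p(X,Z,L)^F has as its justification set exactly the set of justifications of the L edge constraints forming a path of length L from X to Z. -/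
variable {V J : Type*} [DecidableEq V] [DecidableEq J]

/-- Constraints of the shortest-path program with justifications:
edge constraints `e(x,y)^F`, path constraints `p(x,y,l)^F`, and remembered
removed path constraints `rem(p(x,y,l)^{Fc})^F`. -/
inductive SPC (V J : Type*) where
  | edge (x y : V) (F : Finset J)
  | path (x y : V) (l : ℕ) (F : Finset J)
  | rem (x y : V) (l : ℕ) (Fc F : Finset J)

/-- One transition of the translated shortest-path program:
`e(X,Y) ⇒ p(X,Y,1)`, `e(X,Y) ∧ p(Y,Z,L) ⇒ p(X,Z,L+1)`, and
`p(X,Y,L1) \ p(X,Y,L2) ⇔ L1 ≤ L2 | true`; bodies are annotated with the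
union of the head justification sets, removed constraints are remembered. -/
def SPStep (S T : Multiset (SPC V J)) : Prop :=
  (∃ (x y : V) (F : Finset J),
      SPC.edge x y F ∈ S ∧ T = SPC.path x y 1 F ::ₘ S) ∨
  (∃ (x y z : V) (l : ℕ) (F₁ F₂ : Finset J),
      SPC.edge x y F₁ ∈ S ∧ SPC.path y z l F₂ ∈ S ∧
      T = SPC.path x z (l + 1) (F₁ ∪ F₂) ::ₘ S) ∨
  (∃ (x y : V) (l₁ l₂ : ℕ) (F₁ F₂ : Finset J) (G : Multiset (SPC V J)),
      l₁ ≤ l₂ ∧ S = SPC.path x y l₁ F₁ ::ₘ SPC.path x y l₂ F₂ ::ₘ G ∧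
      T = SPC.path x y l₁ F₁ ::ₘ SPC.rem x y l₂ F₂ (F₁ ∪ F₂) ::ₘ G)

/-- The initial state: each edge of `E` annotated with its own distinct
justification. -/
def spInit (E : Finset (V × V)) (fE : V × V → J) : Multiset (SPC V J) :=
  E.val.map fun p => SPC.edge p.1 p.2 {fE p}

/-!
The invariant: every edge constraint is `e(a,b)^{fE(a,b)}` for an edge `(a,b) ∈ E`, and every
path constraint, active or remembered, is labelled by the edges of a path in `E` of its length.
Firing `e(X,Y) ⇒ p(X,Y,1)` yields a one-edge path, `e(X,Y) ∧ p(Y,Z,L) ⇒ p(X,Z,L+1)` prepends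
the edge `(X,Y)` to the path of `p(Y,Z,L)`, and the simpagation rule only moves `p(X,Y,L2)` into
the memory with its justification set unchanged.
-/

def IsPathJustification (E : Finset (V × V)) (fE : V × V → J) (x z : V) (L : ℕ)
    (F : Finset J) : Prop :=
  ∃ vs : List V,
    vs.IsChain (fun a b => (a, b) ∈ E) ∧
    vs.head? = some x ∧ vs.getLast? = some z ∧
    vs.length = L + 1 ∧ 1 ≤ L ∧
    F = ((vs.zip vs.tail).map fE).toFinset

omit [DecidableEq V] in
theorem isPathJustification_single {E : Finset (V × V)} {fE : V × V → J} {a b : V}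
    (hab : (a, b) ∈ E) : IsPathJustification E fE a b 1 {fE (a, b)} :=
  ⟨[a, b], by simpa using hab, rfl, rfl, rfl, le_rfl, by simp⟩

omit [DecidableEq V] in
theorem IsPathJustification.cons {E : Finset (V × V)} {fE : V × V → J} {a b c : V} {l : ℕ}
    {F : Finset J} (hab : (a, b) ∈ E) (hbc : IsPathJustification E fE b c l F) :
    IsPathJustification E fE a c (l + 1) ({fE (a, b)} ∪ F) := by
  obtain ⟨vs, hchain, hhead, hlast, hlen, hl, rfl⟩ := hbc
  cases vs with
  | nil => simp at hhead
  | cons b' vs =>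
    obtain rfl : b' = b := Option.some.inj hhead
    exact ⟨a :: b' :: vs, hchain.cons_cons hab, rfl, by simpa using hlast, by simpa using hlen,
      by omega, by simp⟩

/-- A remembered constraint `rem(p(a,b,l)^{Fc})^F` is judged by its original label `Fc`. -/
def SPC.IsJustified (E : Finset (V × V)) (fE : V × V → J) : SPC V J → Prop
  | .edge a b F => (a, b) ∈ E ∧ F = {fE (a, b)}
  | .path a b l F => IsPathJustification E fE a b l F
  | .rem a b l Fc _ => IsPathJustification E fE a b l Fc

omit [DecidableEq V] in
theorem isJustified_of_mem_spInit {E : Finset (V × V)} {fE : V × V → J} {c : SPC V J}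
    (hc : c ∈ spInit E fE) : c.IsJustified E fE := by
  obtain ⟨p, hp, rfl⟩ := Multiset.mem_map.mp hc
  exact ⟨hp, rfl⟩

omit [DecidableEq V] in
theorem SPStep.isJustified {E : Finset (V × V)} {fE : V × V → J} {S T : Multiset (SPC V J)}
    (hST : SPStep S T) (hS : ∀ c ∈ S, c.IsJustified E fE) :
    ∀ c ∈ T, c.IsJustified E fE := by
  rcases hST with ⟨a, b, F, hedge, rfl⟩ | ⟨a, b, c, l, F₁, F₂, hedge, hpath, rfl⟩ |
    ⟨a, b, l₁, l₂, F₁, F₂, G, -, rfl, rfl⟩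
  · obtain ⟨hab, rfl⟩ := hS _ hedge
    exact Multiset.forall_mem_cons.mpr ⟨isPathJustification_single hab, hS⟩
  · obtain ⟨hab, rfl⟩ := hS _ hedge
    exact Multiset.forall_mem_cons.mpr ⟨(hS _ hpath).cons hab, hS⟩
  · simp only [Multiset.forall_mem_cons] at hS ⊢
    exact hS

omit [DecidableEq V] in
theorem isJustified_of_reachable {E : Finset (V × V)} {fE : V × V → J}
    {S : Multiset (SPC V J)} (hreach : Relation.ReflTransGen SPStep (spInit E fE) S) :
    ∀ c ∈ S, c.IsJustified E fE := by
  induction hreach with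
  | refl => exact fun _ => isJustified_of_mem_spInit
  | tail _ hstep ih => exact hstep.isJustified ih

theorem sp_justifications_are_path_general (E : Finset (V × V)) (fE : V × V → J)
    (S : Multiset (SPC V J))
    (hreach : Relation.ReflTransGen SPStep (spInit E fE) S)
    (x z : V) (L : ℕ) (F : Finset J)
    (h : SPC.path x z L F ∈ S ∨ ∃ F', SPC.rem x z L F F' ∈ S) :
    ∃ vs : List V,
      vs.Chain' (fun a b => (a, b) ∈ E) ∧
      vs.head? = some x ∧ vs.getLast? = some z ∧
      vs.length = L + 1 ∧ 1 ≤ L ∧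
      F = ((vs.zip vs.tail).map fE).toFinset := by
  have hS := isJustified_of_reachable hreach
  rcases h with h | ⟨_, h⟩ <;> exact hS _ h

/-- In the shortest-path program with justifications, every derived (active or
remembered) path constraint `p(x,z,L)^F` has as justification set exactly the
justifications of the `L` edges of a directed path of length `L` from `x` to
`z` in the initial graph. -/
theorem sp_justifications_are_path (E : Finset (V × V)) (fE : V × V → J)
    (hinj : Function.Injective fE)
    (S : Multiset (SPC V J))
    (hreach : Relation.ReflTransGen SPStep (spInit E fE) S)
    (x z : V) (L : ℕ) (F : Finset J)
    (h : SPC.path x z L F ∈ S ∨ ∃ F', SPC.rem x z L F F' ∈ S) :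
    ∃ vs : List V,
      vs.Chain' (fun a b => (a, b) ∈ E) ∧
      vs.head? = some x ∧ vs.getLast? = some z ∧
      vs.length = L + 1 ∧ 1 ≤ L ∧
      F = ((vs.zip vs.tail).map fE).toFinset :=
  sp_justifications_are_path_general E fE S hreach x z L F h
end
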